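/- arXiv:1910.06906 — 3 statements merged into one kernel-verified Lean document; each statement's English description precedes it below -/
import Mathlib

section
/- Let d ≥ 5 be an integer, κ ∈ {−2, 0, 2} (with 3 | d when κ = ±2), and let 0 ≤ λ < μ < ν < d be integers. The three lines ℓ_{φ_λ}, ℓ_{φ_μ}, ℓ_{φ_ν} have a common point if and only if λ + μ + ν ≡ κ (mod d). -/
open Real

/-- The tangent line `ℓ_φ = {e^{-2iφ} + t e^{iφ} : t ∈ ℝ}` of the deltoid. -/
noncomputable def tline (φ : ℝ) : Set ℂ :=
  {w : ℂ | ∃ t : ℝ, w = Complex.exp (((-(2 * φ) : ℝ) : ℂ) * Complex.I) +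
      (t : ℂ) * Complex.exp ((φ : ℂ) * Complex.I)}

/-- `w ∈ ℓ_φ` iff `q = e^{2iφ}` is a root of `q³ - w̄ q² + w q - 1`. -/
lemma mem_tline_iff (φ : ℝ) (w : ℂ) :
    w ∈ tline φ ↔
      Complex.exp (((2*φ : ℝ) : ℂ) * Complex.I)^3
        - (starRingEnd ℂ) w * Complex.exp (((2*φ : ℝ) : ℂ) * Complex.I)^2
        + w * Complex.exp (((2*φ : ℝ) : ℂ) * Complex.I) = 1 := by
  set e := Complex.exp ((φ : ℂ) * Complex.I) with he_def
  have he : e ≠ 0 := Complex.exp_ne_zero _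
  have hq : Complex.exp (((2*φ : ℝ) : ℂ) * Complex.I) = e^2 := by
    rw [show (((2*φ : ℝ) : ℂ) * Complex.I) = (φ:ℂ)*Complex.I + (φ:ℂ)*Complex.I by push_cast; ring,
      Complex.exp_add, he_def, sq]
  have hneg : Complex.exp (((-(2 * φ) : ℝ) : ℂ) * Complex.I) = (e^2)⁻¹ := by
    rw [← hq, ← Complex.exp_neg]
    congr 1; push_cast; ring
  have hconj : (starRingEnd ℂ) e = e⁻¹ := by
    rw [he_def, ← Complex.exp_conj, ← Complex.exp_neg]
    congr 1
    simp [Complex.conj_ofReal]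
  constructor
  · rintro ⟨t, rfl⟩
    rw [hq, hneg]
    rw [← he_def]
    simp only [map_add, map_mul, hconj, Complex.conj_ofReal]
    have : (starRingEnd ℂ) ((e^2)⁻¹) = e^2 := by
      rw [map_inv₀, map_pow, hconj]; field_simp
    rw [this]
    field_simp
    ring
  · intro h
    rw [hq] at h
    set z := (w - (e^2)⁻¹) * e⁻¹ with hz_def
    have hcw : (starRingEnd ℂ) w = (e^6 + w*e^2 - 1) * (e^4)⁻¹ := by
      rw [eq_mul_inv_iff_mul_eq₀ (pow_ne_zero 4 he)]
      linear_combination -h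
    have hcz : (starRingEnd ℂ) z = z := by
      rw [hz_def]
      simp only [map_mul, map_sub, map_inv₀, map_pow, hconj, hcw]
      field_simp
      ring
    have hre : (z.re : ℂ) = z := Complex.conj_eq_iff_re.mp hcz
    refine ⟨z.re, ?_⟩
    rw [hneg, hre, hz_def, ← he_def]
    field_simp
    ring

/-- If `e^{ia} = e^{ib}` then `a = b + 2πn`. -/
lemma exp_real_eq_exp_real {a b : ℝ}
    (h : Complex.exp ((a:ℂ)*Complex.I) = Complex.exp ((b:ℂ)*Complex.I)) :
    ∃ n : ℤ, a = b + n * (2*π) := by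
  rw [Complex.exp_eq_exp_iff_exists_int] at h
  obtain ⟨n, hn⟩ := h
  refine ⟨n, ?_⟩
  have : ((a:ℝ):ℂ) = ((b + n * (2*π) : ℝ):ℂ) := by
    apply mul_right_cancel₀ Complex.I_ne_zero
    push_cast
    linear_combination hn
  exact_mod_cast this

lemma exp_real_eq_one_iff (a : ℝ) :
    Complex.exp ((a:ℂ)*Complex.I) = 1 ↔ ∃ n : ℤ, a = n * (2*π) := by
  rw [Complex.exp_eq_one_iff]
  constructor
  · rintro ⟨n, hn⟩
    refine ⟨n, ?_⟩
    have : ((a:ℝ):ℂ) = ((n * (2*π) : ℝ):ℂ) := by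
      apply mul_right_cancel₀ Complex.I_ne_zero
      push_cast
      linear_combination hn
    exact_mod_cast this
  · rintro ⟨n, hn⟩
    exact ⟨n, by rw [hn]; push_cast; ring⟩

lemma conj_exp_real (a : ℝ) :
    (starRingEnd ℂ) (Complex.exp ((a:ℂ)*Complex.I)) =
      (Complex.exp ((a:ℂ)*Complex.I))⁻¹ := by
  rw [← Complex.exp_conj, ← Complex.exp_neg]
  congr 1
  simp [Complex.conj_ofReal]

theorem stmt_7 (d : ℕ) (hd : 5 ≤ d) (κ : ℤ) (hκ : κ = -2 ∨ κ = 0 ∨ κ = 2)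
    (hκd : κ ≠ 0 → (3 : ℤ) ∣ (d : ℤ))
    (l m n : ℤ) (h0 : 0 ≤ l) (h1 : l < m) (h2 : m < n) (h3 : n < (d : ℤ)) :
    let φ : ℤ → ℝ := fun j => (3 * (j : ℝ) - (κ : ℝ)) * π / (3 * d)
    (tline (φ l) ∩ tline (φ m) ∩ tline (φ n)).Nonempty ↔
      (d : ℤ) ∣ (l + m + n - κ) := by
  intro φ
  have hdR : (0:ℝ) < (d:ℝ) := by
    have : 0 < d := by omega
    exact_mod_cast this
  have hdR' : (d:ℝ) ≠ 0 := ne_of_gt hdR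
  have hπ : (π:ℝ) ≠ 0 := Real.pi_ne_zero
  set q1 := Complex.exp (((2*φ l : ℝ) : ℂ) * Complex.I) with hq1
  set q2 := Complex.exp (((2*φ m : ℝ) : ℂ) * Complex.I) with hq2
  set q3 := Complex.exp (((2*φ n : ℝ) : ℂ) * Complex.I) with hq3
  -- distinctness
  have key_ne : ∀ j k : ℤ, 0 < k - j → k - j < (d:ℤ) →
      Complex.exp (((2*φ j : ℝ) : ℂ) * Complex.I) ≠
        Complex.exp (((2*φ k : ℝ) : ℂ) * Complex.I) := by
    intro j k hjk1 hjk2 heq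
    obtain ⟨N, hN⟩ := exp_real_eq_exp_real heq
    have hphi : 2*φ j - 2*φ k = 2*((j:ℝ)-k)*π/d := by
      simp only [φ]
      field_simp
      ring
    have hjkR : ((j:ℝ) - k) = (N:ℝ) * d := by
      have h2 : 2*((j:ℝ)-k)*π/d = (N:ℝ)*(2*π) := by linarith
      have h3' : ((j:ℝ)-k)*π*2 = ((N:ℝ)*d)*π*2 := by
        field_simp at h2
        linear_combination (π*2) * h2
      have h4 := mul_right_cancel₀ (by norm_num : (2:ℝ) ≠ 0) h3'
      exact mul_right_cancel₀ hπ h4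
    have hjkZ : j - k = N * (d:ℤ) := by exact_mod_cast hjkR
    have hdZ : (0:ℤ) < (d:ℤ) := by exact_mod_cast (by omega : 0 < d)
    rcases le_or_gt 0 N with hN0 | hN0
    · have : 0 ≤ N * (d:ℤ) := mul_nonneg hN0 (le_of_lt hdZ)
      omega
    · have hN1 : N ≤ -1 := by omega
      have : N * (d:ℤ) ≤ -1 * (d:ℤ) := by
        apply mul_le_mul_of_nonneg_right hN1 (le_of_lt hdZ)
      omega
  have h12 : q1 ≠ q2 := key_ne l m (by omega) (by omega)
  have h13 : q1 ≠ q3 := key_ne l n (by omega) (by omega)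
  have h23 : q2 ≠ q3 := key_ne m n (by omega) (by omega)
  -- product formula
  have hsum : (2*φ l + 2*φ m + 2*φ n : ℝ) = 2*((l:ℝ)+m+n-κ)*π/d := by
    simp only [φ]
    field_simp
    ring
  have hmul : q1 * q2 * q3 =
      Complex.exp (((2*((l:ℝ)+(m:ℝ)+(n:ℝ)-(κ:ℝ))*π/d : ℝ) : ℂ) * Complex.I) := by
    rw [hq1, hq2, hq3, ← Complex.exp_add, ← Complex.exp_add]
    congr 1
    have hC : ((2*φ l + 2*φ m + 2*φ n : ℝ):ℂ) = ((2*((l:ℝ)+m+n-κ)*π/d : ℝ):ℂ) :=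
      congrArg _ hsum
    push_cast at hC ⊢
    linear_combination Complex.I * hC
  constructor
  · rintro ⟨w, ⟨⟨hwl, hwm⟩, hwn⟩⟩
    have E1 : q1^3 - (starRingEnd ℂ) w * q1^2 + w * q1 = 1 := (mem_tline_iff (φ l) w).mp hwl
    have E2 : q2^3 - (starRingEnd ℂ) w * q2^2 + w * q2 = 1 := (mem_tline_iff (φ m) w).mp hwm
    have E3 : q3^3 - (starRingEnd ℂ) w * q3^2 + w * q3 = 1 := (mem_tline_iff (φ n) w).mp hwn
    set cw := (starRingEnd ℂ) w with hcw_def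
    have F12 : (q1 - q2) * (q1^2 + q1*q2 + q2^2 - cw*(q1+q2) + w) = 0 := by
      linear_combination E1 - E2
    have G12 : q1^2 + q1*q2 + q2^2 - cw*(q1+q2) + w = 0 :=
      (mul_eq_zero.mp F12).resolve_left (sub_ne_zero.mpr h12)
    have F13 : (q1 - q3) * (q1^2 + q1*q3 + q3^2 - cw*(q1+q3) + w) = 0 := by
      linear_combination E1 - E3
    have G13 : q1^2 + q1*q3 + q3^2 - cw*(q1+q3) + w = 0 :=
      (mul_eq_zero.mp F13).resolve_left (sub_ne_zero.mpr h13)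
    have H : (q2 - q3) * ((q1+q2+q3) - cw) = 0 := by
      linear_combination G12 - G13
    have ha : cw = q1+q2+q3 := by
      have := (mul_eq_zero.mp H).resolve_left (sub_ne_zero.mpr h23)
      linear_combination -this
    have hb : w = q1*q2 + q1*q3 + q2*q3 := by
      linear_combination G12 + (q1+q2)*ha
    have hfinal : q1 * q2 * q3 = 1 := by
      linear_combination E1 + q1^2*ha - q1*hb
    rw [hmul] at hfinal
    obtain ⟨N, hN⟩ := (exp_real_eq_one_iff _).mp hfinal
    have hSR : ((l:ℝ)+m+n-κ) = (N:ℝ) * d := by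
      have h2 : 2*((l:ℝ)+m+n-κ)*π = (N:ℝ)*(2*π)*d := by
        field_simp at hN
        linear_combination (2*π) * hN
      have h3' : (((l:ℝ)+m+n-κ))*π*2 = ((N:ℝ)*d)*π*2 := by linarith
      have h4 := mul_right_cancel₀ (by norm_num : (2:ℝ) ≠ 0) h3'
      exact mul_right_cancel₀ hπ h4
    have hSZ : l + m + n - κ = N * (d:ℤ) := by exact_mod_cast hSR
    exact ⟨N, by linarith⟩
  · rintro ⟨N, hN⟩
    have hprod : q1 * q2 * q3 = 1 := by
      rw [hmul, exp_real_eq_one_iff]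
      refine ⟨N, ?_⟩
      have hNR : ((l:ℝ)+m+n-κ) = (d:ℝ) * N := by exact_mod_cast hN
      rw [hNR]
      field_simp
    have hq1ne : q1 ≠ 0 := Complex.exp_ne_zero _
    have hq2ne : q2 ≠ 0 := Complex.exp_ne_zero _
    have hq3ne : q3 ≠ 0 := Complex.exp_ne_zero _
    have hc1 : (starRingEnd ℂ) q1 = q1⁻¹ := conj_exp_real _
    have hc2 : (starRingEnd ℂ) q2 = q2⁻¹ := conj_exp_real _
    have hc3 : (starRingEnd ℂ) q3 = q3⁻¹ := conj_exp_real _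
    set w := q1*q2 + q1*q3 + q2*q3 with hw_def
    have hcw : (starRingEnd ℂ) w = q1 + q2 + q3 := by
      rw [hw_def]
      have e12 : q1 * q2 = q3⁻¹ := eq_inv_of_mul_eq_one_left (by linear_combination hprod)
      have e13 : q1 * q3 = q2⁻¹ := eq_inv_of_mul_eq_one_left (by linear_combination hprod)
      have e23 : q2 * q3 = q1⁻¹ := eq_inv_of_mul_eq_one_left (by linear_combination hprod)
      simp only [map_add, map_mul, e12, e13, e23, map_inv₀, hc1, hc2, hc3, inv_inv]
      ring
    refine ⟨w, ⟨⟨?_, ?_⟩, ?_⟩⟩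
    · rw [mem_tline_iff, ← hq1, hcw]
      linear_combination hprod
    · rw [mem_tline_iff, ← hq2, hcw]
      linear_combination hprod
    · rw [mem_tline_iff, ← hq3, hcw]
      linear_combination hprod
end

section
/- Let d = 3q with q ≥ 2 an integer. The number of 3-element subsets {λ, μ, ν} of ℤ/dℤ with λ + μ + ν ≡ 1 (mod d) or λ + μ + ν ≡ −1 (mod d) equals 6·(⌊(d−3)²/12⌉ − l(l−1)) if q = 2l + 1 is odd, and 6·(⌊(d−3)²/12⌉ − (l−1)²) if q = 2l is even. -/
open Finset

section
variable {d : ℕ} [NeZero d]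

private lemma graph_card1 (f : ZMod d → ZMod d) :
    ((univ ×ˢ univ : Finset (ZMod d × ZMod d)).filter fun p => p.2 = f p.1).card = d := by
  have h : ((univ ×ˢ univ : Finset (ZMod d × ZMod d)).filter fun p => p.2 = f p.1)
      = univ.image (fun x => (x, f x)) := by
    ext ⟨x, y⟩
    simp [Prod.ext_iff, eq_comm]
  rw [h, Finset.card_image_of_injective _ (fun a b hab => by simpa using congrArg Prod.fst hab)]
  simp [ZMod.card]

private lemma graph_card2 (g : ZMod d → ZMod d) :
    ((univ ×ˢ univ : Finset (ZMod d × ZMod d)).filter fun p => p.1 = g p.2).card = d := by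
  have h : ((univ ×ˢ univ : Finset (ZMod d × ZMod d)).filter fun p => p.1 = g p.2)
      = univ.image (fun y => (g y, y)) := by
    ext ⟨x, y⟩
    simp [Prod.ext_iff, eq_comm, and_comm]
  rw [h, Finset.card_image_of_injective _ (fun a b hab => by simpa using congrArg Prod.snd hab)]
  simp [ZMod.card]

private lemma pairs_card (c : ZMod d) (h3 : ∀ x : ZMod d, x + x + x ≠ c) :
    ((univ ×ˢ univ : Finset (ZMod d × ZMod d)).filter fun p =>
      ¬(p.2 = p.1 ∨ p.2 = c - 2 * p.1 ∨ p.1 = c - 2 * p.2)).card = d * d - 3 * d := by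
  have key := Finset.card_filter_add_card_filter_not
    (s := (univ ×ˢ univ : Finset (ZMod d × ZMod d)))
    (p := fun p => p.2 = p.1 ∨ p.2 = c - 2 * p.1 ∨ p.1 = c - 2 * p.2)
  have htot : (univ ×ˢ univ : Finset (ZMod d × ZMod d)).card = d * d := by
    simp [ZMod.card]
  have hA := graph_card1 (d := d) (fun x => x)
  have hB := graph_card1 (d := d) (fun x => c - 2 * x)
  have hC := graph_card2 (d := d) (fun y => c - 2 * y)
  have hpos : ((univ ×ˢ univ : Finset (ZMod d × ZMod d)).filter fun p =>
      p.2 = p.1 ∨ p.2 = c - 2 * p.1 ∨ p.1 = c - 2 * p.2).card = 3 * d := by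
    rw [filter_or, filter_or]
    rw [Finset.card_union_of_disjoint, Finset.card_union_of_disjoint]
    · rw [hA, hB, hC]; ring
    · rw [Finset.disjoint_left]
      rintro ⟨x, y⟩ h1 h2
      simp only [mem_filter] at h1 h2
      have hxy : x = y := by linear_combination h1.2 - h2.2
      exact h3 x (by linear_combination h1.2 + hxy)
    · rw [Finset.disjoint_left]
      rintro ⟨x, y⟩ h1 h2
      simp only [mem_filter, mem_union] at h1 h2
      rcases h2 with h2 | h2
      · exact h3 x (by linear_combination h2.2 - h1.2)
      · exact h3 x (by linear_combination h2.2 - 2 * h1.2)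
  omega

private lemma triples_card (c : ZMod d) (h3 : ∀ x : ZMod d, x + x + x ≠ c) :
    ((univ ×ˢ univ ×ˢ univ : Finset (ZMod d × ZMod d × ZMod d)).filter fun t =>
      (t.1 ≠ t.2.1 ∧ t.1 ≠ t.2.2 ∧ t.2.1 ≠ t.2.2) ∧ t.1 + t.2.1 + t.2.2 = c).card
      = d * d - 3 * d := by
  rw [← pairs_card c h3]
  apply Finset.card_bij' (i := fun t _ => (t.1, t.2.1))
    (j := fun p _ => (p.1, p.2, c - p.1 - p.2))
  · rintro ⟨x, y, z⟩ ht
    simp only [mem_filter] at ht ⊢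
    obtain ⟨-, ⟨h12, h13, h23⟩, hsum⟩ := ht
    refine ⟨by simp, ?_⟩
    push_neg
    refine ⟨fun h => h12 h.symm, fun h => h13 ?_, fun h => h23 ?_⟩
    · linear_combination h - hsum
    · linear_combination h - hsum
  · rintro ⟨x, y⟩ hp
    simp only [mem_filter] at hp ⊢
    push_neg at hp
    obtain ⟨-, h1, h2, h3'⟩ := hp
    refine ⟨by simp, ⟨fun h => h1 h.symm, fun h => h2 ?_, fun h => h3' ?_⟩, by ring⟩
    · linear_combination h
    · linear_combination h
  · rintro ⟨x, y, z⟩ ht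
    simp only [mem_filter] at ht
    obtain ⟨-, -, hsum⟩ := ht
    simp only [Prod.mk.injEq, true_and]
    linear_combination -hsum
  · rintro ⟨x, y⟩ hp
    rfl

private lemma six_perm {α : Type*} [DecidableEq α] (a b c : α) :
    ({a,c,b} : Finset α) = {a,b,c} ∧ ({b,a,c} : Finset α) = {a,b,c} ∧
    ({b,c,a} : Finset α) = {a,b,c} ∧ ({c,a,b} : Finset α) = {a,b,c} ∧
    ({c,b,a} : Finset α) = {a,b,c} := by
  refine ⟨?_, ?_, ?_, ?_, ?_⟩ <;> (ext w; simp only [mem_insert, mem_singleton]; tauto)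

set_option maxHeartbeats 1000000 in
private lemma fiber6 (c1 c2 : ZMod d) (s : Finset (ZMod d)) (hs3 : s.card = 3)
    (hsum : (∑ x ∈ s, x) = c1 ∨ (∑ x ∈ s, x) = c2) :
    (((univ ×ˢ univ ×ˢ univ : Finset (ZMod d × ZMod d × ZMod d)).filter fun t =>
        (t.1 ≠ t.2.1 ∧ t.1 ≠ t.2.2 ∧ t.2.1 ≠ t.2.2) ∧
          (t.1 + t.2.1 + t.2.2 = c1 ∨ t.1 + t.2.1 + t.2.2 = c2)).filter
      fun t => ({t.1, t.2.1, t.2.2} : Finset (ZMod d)) = s).card = 6 := by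
  obtain ⟨a, b, c, hab, hac, hbc, rfl⟩ := Finset.card_eq_three.mp hs3
  have hba := Ne.symm hab
  have hca := Ne.symm hac
  have hcb := Ne.symm hbc
  have habc : a + b + c = c1 ∨ a + b + c = c2 := by
    have h1 : (∑ x ∈ ({a, b, c} : Finset (ZMod d)), x) = a + b + c := by
      rw [Finset.sum_insert (by simp [hab, hac]), Finset.sum_pair hbc]; ring
    rwa [h1] at hsum
  have hset : (((univ ×ˢ univ ×ˢ univ : Finset (ZMod d × ZMod d × ZMod d)).filter fun t =>
        (t.1 ≠ t.2.1 ∧ t.1 ≠ t.2.2 ∧ t.2.1 ≠ t.2.2) ∧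
          (t.1 + t.2.1 + t.2.2 = c1 ∨ t.1 + t.2.1 + t.2.2 = c2)).filter
      fun t => ({t.1, t.2.1, t.2.2} : Finset (ZMod d)) = {a, b, c})
      = {(a,b,c),(a,c,b),(b,a,c),(b,c,a),(c,a,b),(c,b,a)} := by
    ext ⟨x, y, z⟩
    simp only [mem_filter, mem_insert, mem_singleton, Prod.mk.injEq]
    constructor
    · rintro ⟨⟨-, ⟨h12, h13, h23⟩, -⟩, hst⟩
      have h1 : x ∈ ({a, b, c} : Finset (ZMod d)) := by rw [← hst]; simp
      have h2 : y ∈ ({a, b, c} : Finset (ZMod d)) := by rw [← hst]; simp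
      have h3 : z ∈ ({a, b, c} : Finset (ZMod d)) := by rw [← hst]; simp
      clear hst hsum hs3 habc hba hca hcb
      simp only [mem_insert, mem_singleton] at h1 h2 h3
      rcases h1 with rfl | rfl | rfl <;> rcases h2 with rfl | rfl | rfl <;>
        rcases h3 with rfl | rfl | rfl <;>
        first
          | exact absurd rfl h12
          | exact absurd rfl h13
          | exact absurd rfl h23
          | tauto
    · rintro (⟨rfl, rfl, rfl⟩ | ⟨rfl, rfl, rfl⟩ | ⟨rfl, rfl, rfl⟩ |
        ⟨rfl, rfl, rfl⟩ | ⟨rfl, rfl, rfl⟩ | ⟨rfl, rfl, rfl⟩) <;>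
      refine ⟨⟨by simp, ⟨?_, ?_, ?_⟩,
        habc.imp (fun h => by linear_combination h) (fun h => by linear_combination h)⟩, ?_⟩ <;>
      first
        | rfl
        | assumption
        | exact Ne.symm (by assumption)
        | exact (six_perm _ _ _).1
        | exact (six_perm _ _ _).2.1
        | exact (six_perm _ _ _).2.2.1
        | exact (six_perm _ _ _).2.2.2.1
        | exact (six_perm _ _ _).2.2.2.2
  rw [hset]
  rw [card_insert_of_notMem (by simp [Prod.ext_iff, hab, hac, hbc, hba, hca, hcb]),
      card_insert_of_notMem (by simp [Prod.ext_iff, hab, hac, hbc, hba, hca, hcb]),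
      card_insert_of_notMem (by simp [Prod.ext_iff, hab, hac, hbc, hba, hca, hcb]),
      card_insert_of_notMem (by simp [Prod.ext_iff, hab, hac, hbc, hba, hca, hcb]),
      card_pair (by simp [Prod.ext_iff, hab, hac, hbc, hba, hca, hcb])]

private lemma count6 (q : ℕ) [NeZero (3 * q)] :
    6 * ((((Finset.univ : Finset (ZMod (3 * q))).powersetCard 3).filter
          (fun s => (∑ x ∈ s, x) = (1 : ZMod (3 * q)) ∨
            (∑ x ∈ s, x) = (-1 : ZMod (3 * q)))).card)
      = 2 * ((3 * q) * (3 * q) - 3 * (3 * q)) := by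
  have hdvd : (3 : ℕ) ∣ 3 * q := dvd_mul_right 3 q
  have h3one : ∀ x : ZMod (3 * q), x + x + x ≠ 1 := by
    intro x h
    have h2 : (ZMod.castHom hdvd (ZMod 3)) (x + x + x) = 1 := by rw [h, map_one]
    rw [map_add, map_add] at h2
    generalize (ZMod.castHom hdvd (ZMod 3)) x = y at h2
    revert h2; revert y; decide
  have h3neg : ∀ x : ZMod (3 * q), x + x + x ≠ -1 := by
    intro x h
    have h2 : (ZMod.castHom hdvd (ZMod 3)) (x + x + x) = -1 := by rw [h, map_neg, map_one]
    rw [map_add, map_add] at h2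
    generalize (ZMod.castHom hdvd (ZMod 3)) x = y at h2
    revert h2; revert y; decide
  have hne : (1 : ZMod (3 * q)) ≠ -1 := by
    intro h
    have h2 := congrArg (ZMod.castHom hdvd (ZMod 3)) h
    rw [map_one, map_neg, map_one] at h2
    revert h2; decide
  set tgt := (((Finset.univ : Finset (ZMod (3 * q))).powersetCard 3).filter
          (fun s => (∑ x ∈ s, x) = (1 : ZMod (3 * q)) ∨
            (∑ x ∈ s, x) = (-1 : ZMod (3 * q)))) with htgt
  set U := ((univ ×ˢ univ ×ˢ univ :
      Finset (ZMod (3 * q) × ZMod (3 * q) × ZMod (3 * q))).filter fun t =>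
        (t.1 ≠ t.2.1 ∧ t.1 ≠ t.2.2 ∧ t.2.1 ≠ t.2.2) ∧
          (t.1 + t.2.1 + t.2.2 = 1 ∨ t.1 + t.2.1 + t.2.2 = -1)) with hUdef
  have hUcard : U.card = 2 * ((3 * q) * (3 * q) - 3 * (3 * q)) := by
    have hsplit : U = ((univ ×ˢ univ ×ˢ univ :
        Finset (ZMod (3 * q) × ZMod (3 * q) × ZMod (3 * q))).filter fun t =>
          (t.1 ≠ t.2.1 ∧ t.1 ≠ t.2.2 ∧ t.2.1 ≠ t.2.2) ∧ t.1 + t.2.1 + t.2.2 = 1)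
        ∪ ((univ ×ˢ univ ×ˢ univ :
        Finset (ZMod (3 * q) × ZMod (3 * q) × ZMod (3 * q))).filter fun t =>
          (t.1 ≠ t.2.1 ∧ t.1 ≠ t.2.2 ∧ t.2.1 ≠ t.2.2) ∧ t.1 + t.2.1 + t.2.2 = -1) := by
      rw [hUdef, ← filter_or]
      apply filter_congr
      intro t _
      tauto
    rw [hsplit, Finset.card_union_of_disjoint, triples_card 1 h3one, triples_card (-1) h3neg]
    · ring
    · rw [Finset.disjoint_left]
      rintro t h1 h2
      simp only [mem_filter] at h1 h2
      exact hne (h1.2.2 ▸ h2.2.2)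
  have hmem : ∀ t ∈ U, ({t.1, t.2.1, t.2.2} : Finset (ZMod (3 * q))) ∈ tgt := by
    rintro ⟨x, y, z⟩ ht
    rw [hUdef, mem_filter] at ht
    obtain ⟨-, ⟨h12, h13, h23⟩, hsum⟩ := ht
    rw [htgt, mem_filter, Finset.mem_powersetCard_univ]
    constructor
    · rw [card_insert_of_notMem (by simp [h12, h13]), card_pair h23]
    · have h1 : (∑ w ∈ ({x, y, z} : Finset (ZMod (3 * q))), w) = x + y + z := by
        rw [Finset.sum_insert (by simp [h12, h13]), Finset.sum_pair h23]; ring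
      rw [h1]
      exact hsum
  have hfib := Finset.card_eq_sum_card_fiberwise hmem
  have hsix : ∀ s ∈ tgt, (U.filter fun t =>
      ({t.1, t.2.1, t.2.2} : Finset (ZMod (3 * q))) = s).card = 6 := by
    intro s hs
    rw [htgt, mem_filter, Finset.mem_powersetCard_univ] at hs
    exact fiber6 1 (-1) s hs.1 hs.2
  rw [Finset.sum_congr rfl hsix, Finset.sum_const, smul_eq_mul] at hfib
  rw [mul_comm, ← hfib]
  exact hUcard

theorem stmt_14 (q : ℕ) [NeZero (3 * q)] (hq : 2 ≤ q) :
    (∀ l : ℕ, q = 2 * l + 1 →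
      ((((Finset.univ : Finset (ZMod (3 * q))).powersetCard 3).filter
          (fun s => (∑ x ∈ s, x) = (1 : ZMod (3 * q)) ∨
            (∑ x ∈ s, x) = (-1 : ZMod (3 * q)))).card : ℤ) =
        6 * (round (((3 * q : ℚ) - 3) ^ 2 / 12) - (l : ℤ) * ((l : ℤ) - 1))) ∧
    (∀ l : ℕ, q = 2 * l →
      ((((Finset.univ : Finset (ZMod (3 * q))).powersetCard 3).filter
          (fun s => (∑ x ∈ s, x) = (1 : ZMod (3 * q)) ∨
            (∑ x ∈ s, x) = (-1 : ZMod (3 * q)))).card : ℤ) =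
        6 * (round (((3 * q : ℚ) - 3) ^ 2 / 12) - ((l : ℤ) - 1) ^ 2)) := by
  have hcount := count6 q
  have hle : 3 * (3 * q) ≤ (3 * q) * (3 * q) := by nlinarith
  zify [hle] at hcount
  constructor
  · intro l hl
    have hround : round (((3 * q : ℚ) - 3) ^ 2 / 12) = ((3 * l ^ 2 : ℤ)) := by
      have h1 : ((3 * q : ℚ) - 3) ^ 2 / 12 = ((3 * l ^ 2 : ℤ) : ℚ) := by
        rw [hl]; push_cast; ring
      rw [h1, round_intCast]
    rw [hround]
    have hql : (q : ℤ) = 2 * l + 1 := by rw [hl]; push_cast; ring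
    rw [hql] at hcount
    nlinarith [hcount]
  · intro l hl
    have hround : round (((3 * q : ℚ) - 3) ^ 2 / 12) = ((3 * l ^ 2 - 3 * l + 1 : ℤ)) := by
      have h1 : ((3 * q : ℚ) - 3) ^ 2 / 12 = ((3 * l ^ 2 - 3 * l + 1 : ℤ) : ℚ) + (-(1/4) : ℚ) := by
        rw [hl]; push_cast; ring
      rw [h1, round_eq,
        show ((3 * l ^ 2 - 3 * l + 1 : ℤ) : ℚ) + (-(1/4) : ℚ) + 1 / 2
          = ((3 * l ^ 2 - 3 * l + 1 : ℤ) : ℚ) + 1 / 4 from by ring,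
        Int.floor_intCast_add]
      norm_num
    rw [hround]
    have hql : (q : ℤ) = 2 * l := by rw [hl]; push_cast; ring
    rw [hql] at hcount
    nlinarith [hcount]

end
end

section
/- Let d = 3q with q ≥ 2, and let λ, μ, ν be integers, pairwise distinct modulo d, with λ + μ + ν ≡ −3 (mod d). Consider the triangle T₋₂ with vertices p(ψ_λ, ψ_μ), p(ψ_λ, ψ_ν), p(ψ_μ, ψ_ν), where ψ_j := (3j + 2)π/(3d), and the triangle T₀ with vertices p(φ_λ, φ_μ), p(φ_λ, φ_ν), p(φ_μ, φ_ν), where φ_j := jπ/d. Then each of the three corresponding side lengths of T₀ equals ι_{d,3} := sin(3π/d)/sin(π/d) times that of T₋₂. -/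
open Real

/-- The intersection point `p(φ,ψ)` of the deltoid tangent lines `ℓ_φ` and `ℓ_ψ`. -/
noncomputable def ipt (φ ψ : ℝ) : ℂ :=
  ((3 - 4 * (Real.sin φ ^ 2 - Real.sin φ ^ 2 * Real.sin ψ ^ 2 + Real.sin ψ ^ 2 +
      Real.cos φ * Real.cos ψ * Real.sin φ * Real.sin ψ) : ℝ) : ℂ) +
    ((-4 * Real.sin φ * Real.sin ψ * Real.sin (φ + ψ) : ℝ) : ℂ) * Complex.I


lemma ipt_comm (x y : ℝ) : ipt x y = ipt y x := by
  unfold ipt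
  push_cast
  rw [add_comm (x:ℂ) (y:ℂ)]
  ring

lemma key (f p x : ℝ) :
    ipt f p - ipt f x =
      ((-4 * Real.sin (p - x) * Real.sin (f + p + x) * Real.cos f : ℝ) : ℂ) +
        ((-4 * Real.sin (p - x) * Real.sin (f + p + x) * Real.sin f : ℝ) : ℂ) * Complex.I := by
  unfold ipt
  apply Complex.ext <;>
    simp only [Complex.add_re, Complex.add_im, Complex.sub_re, Complex.sub_im,
      Complex.ofReal_re, Complex.ofReal_im, Complex.mul_re, Complex.mul_im,
      Complex.I_re, Complex.I_im, mul_zero, mul_one, zero_mul, sub_zero, zero_add, zero_sub,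
      add_zero]
  · simp only [Real.sin_sub, Real.sin_add, Real.cos_add]
    linear_combination ((-4)*Real.sin x^2 + 4*Real.sin p^2) * Real.sin_sq_add_cos_sq f
      + ((-4)*Real.cos f^2 + 4*Real.cos f^2*Real.cos x^2
          - 4*Real.sin f*Real.cos f*Real.sin x*Real.cos x) * Real.sin_sq_add_cos_sq p
      + (4*Real.cos f^2 - 4*Real.cos f^2*Real.cos p^2
          + 4*Real.sin f*Real.cos f*Real.sin p*Real.cos p) * Real.sin_sq_add_cos_sq x
  · simp only [Real.sin_sub, Real.sin_add, Real.cos_add]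
    linear_combination (4*Real.sin x*Real.cos x - 4*Real.cos p^2*Real.sin x*Real.cos x
        - 4*Real.sin p*Real.cos p + 4*Real.sin p*Real.cos p*Real.cos x^2
        + 4*Real.sin p*Real.cos p*Real.sin x^2
        - 4*Real.sin p^2*Real.sin x*Real.cos x) * Real.sin_sq_add_cos_sq f
      + ((-4)*Real.sin x*Real.cos x + 4*Real.cos f^2*Real.sin x*Real.cos x
          - 4*Real.sin f*Real.cos f + 4*Real.sin f*Real.cos f*Real.cos x^2) * Real.sin_sq_add_cos_sq p
      + (4*Real.sin p*Real.cos p - 4*Real.cos f^2*Real.sin p*Real.cos p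
          + 4*Real.sin f*Real.cos f - 4*Real.sin f*Real.cos f*Real.cos p^2) * Real.sin_sq_add_cos_sq x

lemma abs_ipt_sub (f p x : ℝ) :
    ‖ipt f p - ipt f x‖ = 4 * (|Real.sin (p - x)| * |Real.sin (f + p + x)|) := by
  rw [key, Complex.norm_add_mul_I]
  have h : (-4 * Real.sin (p - x) * Real.sin (f + p + x) * Real.cos f) ^ 2 +
      (-4 * Real.sin (p - x) * Real.sin (f + p + x) * Real.sin f) ^ 2 =
      (4 * (Real.sin (p - x) * Real.sin (f + p + x))) ^ 2 := by
    linear_combination (16 * Real.sin (p - x) ^ 2 * Real.sin (f + p + x) ^ 2) *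
      Real.sin_sq_add_cos_sq f
  rw [h, Real.sqrt_sq_eq_abs, abs_mul, abs_mul]
  norm_num

lemma abs_sin_kpi_sub (n : ℤ) (x : ℝ) : |Real.sin (n * π - x)| = |Real.sin x| := by
  rw [Real.sin_int_mul_pi_sub, abs_neg, abs_mul]
  rcases Int.even_or_odd n with h | h
  · rw [h.neg_one_zpow]; simp
  · rw [h.neg_one_zpow]; simp

lemma pair (D : ℝ) (hD : 6 ≤ D) (n : ℤ) (u v w u' v' w' : ℝ)
    (hsφ : u + v + w = n * π - 3 * π / D)
    (hsψ : u' + v' + w' = n * π - π / D)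
    (hdiff : v - w = v' - w') :
    ‖ipt u v - ipt u w‖ =
      (Real.sin (3 * π / D) / Real.sin (π / D)) * ‖ipt u' v' - ipt u' w'‖ := by
  have hD0 : (0:ℝ) < D := by linarith
  have h1 : 0 < Real.sin (π / D) := by
    apply Real.sin_pos_of_pos_of_lt_pi
    · positivity
    · rw [div_lt_iff₀ hD0]
      nlinarith [Real.pi_pos]
  have h3 : 0 < Real.sin (3 * π / D) := by
    apply Real.sin_pos_of_pos_of_lt_pi
    · positivity
    · rw [div_lt_iff₀ hD0]
      nlinarith [Real.pi_pos]
  rw [abs_ipt_sub, abs_ipt_sub, hsφ, hsψ, hdiff, abs_sin_kpi_sub, abs_sin_kpi_sub,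
    abs_of_pos h1, abs_of_pos h3]
  field_simp

theorem stmt_17 (q : ℕ) (hq : 2 ≤ q) (a b c : ℤ)
    (hab : ¬ ((3 * q : ℤ) ∣ (b - a))) (hac : ¬ ((3 * q : ℤ) ∣ (c - a)))
    (hbc : ¬ ((3 * q : ℤ) ∣ (c - b)))
    (hsum : (3 * q : ℤ) ∣ (a + b + c + 3)) :
    let d : ℕ := 3 * q
    let ψ : ℤ → ℝ := fun j => (3 * (j : ℝ) + 2) * π / (3 * d)
    let φ : ℤ → ℝ := fun j => (j : ℝ) * π / d
    let ι : ℝ := Real.sin (3 * π / d) / Real.sin (π / d)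
    ‖ipt (φ a) (φ b) - ipt (φ a) (φ c)‖ =
      ι * ‖ipt (ψ a) (ψ b) - ipt (ψ a) (ψ c)‖ ∧
    ‖ipt (φ a) (φ b) - ipt (φ b) (φ c)‖ =
      ι * ‖ipt (ψ a) (ψ b) - ipt (ψ b) (ψ c)‖ ∧
    ‖ipt (φ a) (φ c) - ipt (φ b) (φ c)‖ =
      ι * ‖ipt (ψ a) (ψ c) - ipt (ψ b) (ψ c)‖ := by
  intro d ψ φ ι
  obtain ⟨n, hn⟩ := hsum
  have hD : ((d : ℕ) : ℝ) = 3 * (q : ℝ) := by simp [d]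
  set D : ℝ := ((d : ℕ) : ℝ) with hDdef
  have hq' : (2 : ℝ) ≤ (q : ℝ) := by exact_mod_cast hq
  have hD6 : 6 ≤ D := by rw [hD]; linarith
  have hD0 : (0:ℝ) < D := by linarith
  have hnr : (a : ℝ) + b + c + 3 = D * n := by
    rw [hD]; exact_mod_cast congrArg (Int.cast : ℤ → ℝ) hn
  have hφ : ∀ j : ℤ, φ j = (j : ℝ) * π / D := fun j => rfl
  have hψ : ∀ j : ℤ, ψ j = (3 * (j : ℝ) + 2) * π / (3 * D) := fun j => rfl
  have hιdef : ι = Real.sin (3 * π / D) / Real.sin (π / D) := rfl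
  have hcast : ∀ x y z : ℤ, x + y + z = a + b + c → (x:ℝ) + y + z = D * n - 3 := by
    intro x y z h
    have h2 : (x:ℝ) + y + z = (a:ℝ) + b + c := by exact_mod_cast congrArg (Int.cast : ℤ → ℝ) h
    linarith [hnr]
  have hsφ : ∀ x y z : ℤ, x + y + z = a + b + c → φ x + φ y + φ z = n * π - 3 * π / D := by
    intro x y z h
    have h1 : φ x + φ y + φ z = ((x:ℝ) + y + z) * π / D := by
      rw [hφ, hφ, hφ]; ring
    rw [h1, hcast x y z h]
    field_simp
  have hsψ : ∀ x y z : ℤ, x + y + z = a + b + c → ψ x + ψ y + ψ z = n * π - π / D := by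
    intro x y z h
    have h1 : ψ x + ψ y + ψ z = (3 * ((x:ℝ) + y + z) + 6) * π / (3 * D) := by
      rw [hψ, hψ, hψ]; ring
    rw [h1, hcast x y z h]
    field_simp
    ring
  have hdf : ∀ x y : ℤ, φ x - φ y = ψ x - ψ y := by
    intro x y
    rw [hφ, hφ, hψ, hψ]
    field_simp
    ring
  refine ⟨?_, ?_, ?_⟩
  · exact pair D hD6 n (φ a) (φ b) (φ c) (ψ a) (ψ b) (ψ c)
      (hsφ a b c rfl) (hsψ a b c rfl) (hdf b c)
  · rw [ipt_comm (φ a) (φ b), ipt_comm (ψ a) (ψ b)]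
    exact pair D hD6 n (φ b) (φ a) (φ c) (ψ b) (ψ a) (ψ c)
      (hsφ b a c (by ring)) (hsψ b a c (by ring)) (hdf a c)
  · rw [ipt_comm (φ a) (φ c), ipt_comm (φ b) (φ c), ipt_comm (ψ a) (ψ c), ipt_comm (ψ b) (ψ c)]
    exact pair D hD6 n (φ c) (φ a) (φ b) (ψ c) (ψ a) (ψ b)
      (hsφ c a b (by ring)) (hsψ c a b (by ring)) (hdf a b)
end
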